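/- arXiv:1411.7728 — 6 statements merged into one kernel-verified Lean document; each statement's English description precedes it below -/
import Mathlib

section
/- Let g ≥ 2 and let n, n1, n2, n3 be positive integers with 2 ≤ n1 ≤ n2 ≤ n3, lcm of any two of n1, n2, n3 equal to n, and 2(g-1) = n(1 - 1/n1 - 1/n2 - 1/n3). Then n ≤ 2n1·g/(n1 - 1) + n1. -/
theorem stmt_5 (g n n1 n2 n3 : ℕ)
    (hg : 2 ≤ g)
    (hn : 0 < n) (h1 : 2 ≤ n1) (h12' : n1 ≤ n2) (h23' : n2 ≤ n3)
    (h12 : Nat.lcm n1 n2 = n) (h23 : Nat.lcm n2 n3 = n) (h31 : Nat.lcm n3 n1 = n)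
    (hRH : 2 * ((g : ℚ) - 1) = n * (1 - 1/n1 - 1/n2 - 1/n3)) :
    (n : ℚ) ≤ 2 * n1 * g / ((n1 : ℚ) - 1) + n1 := by
  have hn1 : 0 < n1 := by omega
  have hn2 : 0 < n2 := by omega
  have hn3 : 0 < n3 := by omega
  have h2n : n2 ∣ n := h12 ▸ Nat.dvd_lcm_right _ _
  have h3n : n3 ∣ n := h23 ▸ Nat.dvd_lcm_right _ _
  set k2 := n / n2 with hk2
  set k3 := n / n3 with hk3
  have hnk2 : n = k2 * n2 := (Nat.div_mul_cancel h2n).symm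
  have hnk3 : n = k3 * n3 := (Nat.div_mul_cancel h3n).symm
  have hk2d : k2 ∣ n1 := by
    have h : n ∣ n1 * n2 := h12 ▸ Nat.lcm_dvd_mul _ _
    rw [hnk2] at h
    exact (Nat.mul_dvd_mul_iff_right hn2).mp h
  have hk3d : k3 ∣ n1 := by
    have h : n ∣ n3 * n1 := h31 ▸ Nat.lcm_dvd_mul _ _
    rw [hnk3, Nat.mul_comm n3 n1] at h
    exact (Nat.mul_dvd_mul_iff_right hn3).mp h
  have hk3d2 : k3 ∣ n2 := by
    have h : n ∣ n2 * n3 := h23 ▸ Nat.lcm_dvd_mul _ _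
    rw [hnk3] at h
    exact (Nat.mul_dvd_mul_iff_right hn3).mp h
  have hk3le : k3 ≤ k2 := Nat.div_le_div_left h23' hn2
  have hsum : k2 + k3 ≤ n1 + 1 := by
    have hk2le : k2 ≤ n1 := Nat.le_of_dvd hn1 hk2d
    rcases eq_or_lt_of_le hk2le with heq | hlt
    · -- k2 = n1, so n = n1 * n2, gcd n1 n2 = 1, k3 = 1
      have hne : n = n1 * n2 := by rw [hnk2, heq]
      have hg1 : Nat.gcd n1 n2 * n = 1 * n := by
        rw [one_mul, ← h12, Nat.gcd_mul_lcm, ← hne, h12]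
      have hg1' : Nat.gcd n1 n2 = 1 := Nat.eq_of_mul_eq_mul_right hn hg1
      have : k3 ∣ 1 := hg1' ▸ Nat.dvd_gcd hk3d hk3d2
      have : k3 = 1 := Nat.dvd_one.mp this
      omega
    · obtain ⟨m, hm⟩ := hk2d
      have hk2pos : 0 < k2 := Nat.div_pos (Nat.le_of_dvd hn h2n) hn2
      have hm2 : 2 ≤ m := by
        rcases Nat.lt_or_ge m 2 with h | h
        · interval_cases m <;> omega
        · exact h
      have : 2 * k2 ≤ n1 := by
        calc 2 * k2 ≤ m * k2 := Nat.mul_le_mul_right _ hm2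
        _ = n1 := by rw [hm, Nat.mul_comm]
      omega
  -- rational part
  have hne1 : (n1:ℚ) ≠ 0 := by positivity
  have hne2 : (n2:ℚ) ≠ 0 := by positivity
  have hne3 : (n3:ℚ) ≠ 0 := by positivity
  have hc2 : (n:ℚ) = (k2:ℚ) * n2 := by exact_mod_cast congrArg (Nat.cast : ℕ → ℚ) hnk2
  have hc3 : (n:ℚ) = (k3:ℚ) * n3 := by exact_mod_cast congrArg (Nat.cast : ℕ → ℚ) hnk3
  field_simp at hRH
  have key : (n:ℚ) * ((n1:ℚ) - 1) * (n2 * n3) = (n1:ℚ) * (2*g - 2 + k2 + k3) * (n2 * n3) := by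
    linear_combination -hRH + ((n1:ℚ)*n3) * hc2 + ((n1:ℚ)*n2) * hc3
  have key' : (n:ℚ) * ((n1:ℚ) - 1) = (n1:ℚ) * (2*g - 2 + k2 + k3) := by
    have h23q : (0:ℚ) < n2 * n3 := by positivity
    exact mul_right_cancel₀ (ne_of_gt h23q) key
  have ha : (0:ℚ) < (n1:ℚ) - 1 := by
    have : (2:ℚ) ≤ n1 := by exact_mod_cast h1
    linarith
  rw [div_add' _ _ _ (ne_of_gt ha), le_div_iff₀ ha]
  have hsumq : (k2:ℚ) + k3 ≤ (n1:ℚ) + 1 := by exact_mod_cast hsum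
  have hgq : (2:ℚ) ≤ g := by exact_mod_cast hg
  have hn1q : (2:ℚ) ≤ n1 := by exact_mod_cast h1
  nlinarith [key', hsumq, hgq, hn1q]
end

section
/- Let N ≥ 3 and g > (N-1)N(N+1)/2. Suppose n, n1, n2, n3 are positive integers with 2 ≤ n1 ≤ n2 ≤ n3, lcm of any two of n1, n2, n3 equal to n, and 2(g-1) = n(1 - 1/n1 - 1/n2 - 1/n3). Then n1 = N if and only if 2N·g/(N-1) ≤ n < 2(N-1)·g/(N-2). -/
set_option maxHeartbeats 4000000

lemma poly_cube (N : ℤ) (hN : 3 ≤ N) :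
    (0:ℤ) ≤ N^3 - 3*N^2 + 3*N + 1 ∧ (0:ℤ) ≤ 2*N^3 - 3*N^2 + N + 4 ∧
      (0:ℤ) ≤ 2*N^3 - 3*N^2 - N + 4 := by
  refine ⟨?_, ?_, ?_⟩ <;>
  nlinarith [mul_nonneg (mul_nonneg (by linarith : (0:ℤ) ≤ N) (by linarith : (0:ℤ) ≤ N)) (by linarith : (0:ℤ) ≤ N - 3)]

lemma poly1 (N M : ℤ) (hN : 3 ≤ N) (h1 : N + 1 ≤ M) (h2 : M ≤ 2*N - 1) :
    N*(M-1)^2 < (M-N)*(N^3-N+1+M) := by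
  have hk1 : (0:ℤ) ≤ M - N - 1 := by linarith
  nlinarith [mul_nonneg hk1 (poly_cube N hN).1,
    mul_nonneg (mul_nonneg hk1 (by linarith : (0:ℤ) ≤ N - 1)) (by linarith : (0:ℤ) ≤ 2*N - 1 - M)]

lemma poly2 (N M : ℤ) (hN : 3 ≤ N) (h1 : N + 1 ≤ M) (h2 : M ≤ 2*N - 1) :
    N*(M-2)*(M-1) < 2*(M-N)*(N^3-N+2) := by
  have hk1 : (0:ℤ) ≤ M - N - 1 := by linarith
  nlinarith [mul_nonneg hk1 (poly_cube N hN).2.1,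
    mul_nonneg (mul_nonneg hk1 (by linarith : (0:ℤ) ≤ N)) (by linarith : (0:ℤ) ≤ 2*N - 1 - M),
    mul_nonneg (by linarith : (0:ℤ) ≤ N) (by linarith : (0:ℤ) ≤ N - 3),
    mul_nonneg (mul_nonneg (by linarith : (0:ℤ) ≤ N) (by linarith : (0:ℤ) ≤ N)) (by linarith : (0:ℤ) ≤ N)]

lemma poly3 (N M : ℤ) (hN : 3 ≤ N) (h1 : N + 1 ≤ M) (h2 : M ≤ 2*N - 1) :
    N*M*(M-1) < 2*(M-N)*(N^3-N+2) := by
  have hk1 : (0:ℤ) ≤ M - N - 1 := by linarith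
  nlinarith [mul_nonneg hk1 (poly_cube N hN).2.2,
    mul_nonneg (mul_nonneg hk1 (by linarith : (0:ℤ) ≤ N)) (by linarith : (0:ℤ) ≤ 2*N - 1 - M),
    mul_nonneg (by linarith : (0:ℤ) ≤ N) (by linarith : (0:ℤ) ≤ N - 3),
    mul_nonneg (mul_nonneg (by linarith : (0:ℤ) ≤ N) (by linarith : (0:ℤ) ≤ N)) (by linarith : (0:ℤ) ≤ N - 1)]



lemma hard_case (N g n n1 a d e : ℕ) (hN : 3 ≤ N)
    (HE : 2 * (g:ℤ) + a + d + e = (n:ℤ) + 2)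
    (Hn : (n:ℤ) = (n1:ℤ) * a)
    (H2g : ((N:ℤ)) ^ 3 + 2 ≤ 2 * g + N)
    (HN : (3:ℤ) ≤ (N:ℤ))
    (Ha1 : (1:ℤ) ≤ (a:ℤ)) (Hd1 : (1:ℤ) ≤ (d:ℤ)) (He1 : (1:ℤ) ≤ (e:ℤ))
    (Hda : (d:ℤ) ≤ (a:ℤ)) (Hed : (e:ℤ) ≤ (d:ℤ))
    (Hde_n1 : (d:ℤ) * e ≤ (n1:ℤ))
    (HM : (N:ℤ) + 1 ≤ (n1:ℤ))
    -- divisibility consequences, supplied as hypotheses here (ℕ side, proved in main file):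
    (hdm : d ∣ n1) (hdem : d * e ∣ n1)
    (cad : Nat.Coprime a d) (cde : Nat.Coprime d e)
    (hn1 : 0 < n1) :
    (N:ℤ) * (a + d + e) < (n:ℤ) + 2 * N := by
  have Hag : 2*(g:ℤ) ≤ ((n1:ℤ) - 1) * a := by linarith [HE, Hn]
  have Hbig : ((N:ℤ))^3 - N + 2 ≤ 2 * g := by linarith
  rw [Hn]
  by_cases he2 : e = 1
  · have HeZ : (e:ℤ) = 1 := by exact_mod_cast he2
    rw [HeZ]
    by_cases hd2 : d = 1
    · -- case A
      have HdZ : (d:ℤ) = 1 := by exact_mod_cast hd2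
      rw [HdZ]
      linarith [mul_le_mul_of_nonneg_right HM (by linarith : (0:ℤ) ≤ (a:ℤ))]
    · -- case B : d ≥ 2
      have hd2' : (2:ℤ) ≤ (d:ℤ) := by
        have : 2 ≤ d := by omega
        exact_mod_cast this
      have hadne : a ≠ d := by
        intro hh
        have := (Nat.coprime_self d).mp (hh ▸ cad)
        omega
      have HdaS : (d:ℤ) + 1 ≤ (a:ℤ) := by
        have : d + 1 ≤ a := by
          rcases Nat.lt_or_ge d a with h' | h'
          · omega
          · have hda' : d ≤ a := by exact_mod_cast Hda
            omega
        exact_mod_cast this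
      by_cases hdm' : d = n1
      · -- B1 : d = n1, so a ≥ n1 + 1
        have HdM : (d:ℤ) = (n1:ℤ) := by exact_mod_cast hdm'
        have HaM : (n1:ℤ) + 1 ≤ (a:ℤ) := by rw [← HdM]; exact HdaS
        rw [HdM]
        have Heq : ((n1:ℤ) - 1) * a = 2*g + n1 - 1 := by
          linarith [HE, Hn, HdM, HeZ]
        by_cases hmb : 2 * N ≤ n1
        · have hmbZ : 2*(N:ℤ) ≤ (n1:ℤ) := by exact_mod_cast hmb
          nlinarith [mul_nonneg (by linarith : (0:ℤ) ≤ (n1:ℤ) - 2*N) (by linarith : (0:ℤ) ≤ (n1:ℤ) + 1),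
            mul_nonneg (by linarith : (0:ℤ) ≤ (n1:ℤ) - N) (by linarith : (0:ℤ) ≤ (a:ℤ) - n1 - 1)]
        · have hmbZ : (n1:ℤ) ≤ 2*(N:ℤ) - 1 := by
            have : n1 ≤ 2*N - 1 := by omega
            have h' : (n1:ℤ) ≤ ((2*N - 1 : ℕ) : ℤ) := by exact_mod_cast this
            have : ((2*N - 1 : ℕ) : ℤ) = 2*(N:ℤ) - 1 := by
              have : 1 ≤ 2*N := by omega
              push_cast [this]
              ring
            linarith [h', this.le]
          -- polynomial bound
          have hpoly : (N:ℤ)*((n1:ℤ)-1)^2 < ((n1:ℤ)-N)*((N:ℤ)^3-N+1+n1) :=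
            poly1 N (n1:ℤ) HN (by linarith) (by linarith)
          have hrw : ((n1:ℤ)-N)*(((n1:ℤ)-1)*a) = ((n1:ℤ)-N)*(2*g+n1-1) := by rw [Heq]
          have hup2 : ((n1:ℤ)-N)*((N:ℤ)^3-N+1+n1) ≤ ((n1:ℤ)-N)*(2*g+n1-1) :=
            mul_le_mul_of_nonneg_left (by linarith) (by linarith)
          have hstep : ((N:ℤ)*((n1:ℤ)-1)) * ((n1:ℤ)-1) < (((n1:ℤ)-N)*a) * ((n1:ℤ)-1) := by
            nlinarith [hpoly, hup2, hrw]
          have hfin : (N:ℤ)*((n1:ℤ)-1) < ((n1:ℤ)-N)*a :=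
            lt_of_mul_lt_mul_right hstep (by linarith)
          linarith [hfin]
      · -- B2 : d < n1 and d ∣ n1, so 2d ≤ n1
        have h2d : 2 * d ≤ n1 := by
          obtain ⟨k, hk⟩ := hdm
          rcases Nat.lt_or_ge k 2 with hk2 | hk2
          · interval_cases k <;> omega
          · calc 2 * d = d * 2 := by ring
            _ ≤ d * k := Nat.mul_le_mul_left _ hk2
            _ = n1 := hk.symm
        have h2dZ : 2 * (d:ℤ) ≤ (n1:ℤ) := by exact_mod_cast h2d
        by_cases hmb : 2 * N ≤ n1
        · have hmbZ : 2*(N:ℤ) ≤ (n1:ℤ) := by exact_mod_cast hmb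
          nlinarith [mul_nonneg (by linarith : (0:ℤ) ≤ (n1:ℤ) - 2*N) (by linarith : (0:ℤ) ≤ (d:ℤ)),
            mul_nonneg (by linarith : (0:ℤ) ≤ (n1:ℤ) - N) (by linarith : (0:ℤ) ≤ (a:ℤ) - d)]
        · have hmbZ : (n1:ℤ) ≤ 2*(N:ℤ) - 1 := by
            have h' : n1 + 1 ≤ 2*N := by omega
            have := (Nat.cast_le (α := ℤ)).mpr h'
            push_cast at this
            linarith
          have hpoly : (N:ℤ)*((n1:ℤ)-2)*((n1:ℤ)-1) < 2*((n1:ℤ)-N)*((N:ℤ)^3-N+2) :=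
            poly2 N (n1:ℤ) HN (by linarith) (by linarith)
          have t1 := mul_le_mul_of_nonneg_left (show 2*((d:ℤ)-1) ≤ (n1:ℤ) - 2 by linarith)
                (mul_nonneg (by linarith : (0:ℤ) ≤ (N:ℤ)) (by linarith : (0:ℤ) ≤ (n1:ℤ)-1))
          have t2 := mul_le_mul_of_nonneg_left Hbig (show (0:ℤ) ≤ 2*((n1:ℤ)-N) by linarith)
          have t3 := mul_le_mul_of_nonneg_left Hag (show (0:ℤ) ≤ 2*((n1:ℤ)-N) by linarith)
          have hstep : ((N:ℤ)*((d:ℤ)-1)) * (2*((n1:ℤ)-1)) < (((n1:ℤ)-N)*a) * (2*((n1:ℤ)-1)) := by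
            linarith [hpoly, t1, t2, t3]
          have hfin : (N:ℤ)*((d:ℤ)-1) < ((n1:ℤ)-N)*a :=
            lt_of_mul_lt_mul_right hstep (by linarith)
          linarith [hfin]
  · -- case C : e ≥ 2
    have he3 : (2:ℤ) ≤ (e:ℤ) := by
      have : 2 ≤ e := by omega
      exact_mod_cast this
    have hdene : d ≠ e := by
      intro hh
      have := (Nat.coprime_self e).mp (hh ▸ cde)
      omega
    have hd3 : (e:ℤ) + 1 ≤ (d:ℤ) := by
      have : e + 1 ≤ d := by
        rcases Nat.lt_or_ge e d with h' | h'
        · omega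
        · have hed' : e ≤ d := by exact_mod_cast Hed
          omega
      exact_mod_cast this
    have h4sum : 2*((d:ℤ) + e) ≤ (d:ℤ)*e + 4 := by
      nlinarith [mul_nonneg (by linarith : (0:ℤ) ≤ (d:ℤ) - 2) (by linarith : (0:ℤ) ≤ (e:ℤ) - 2)]
    by_cases hmb : n1 ≤ 2*N - 1
    · have hmbZ : (n1:ℤ) ≤ 2*(N:ℤ) - 1 := by
        have h' : n1 + 1 ≤ 2*N := by omega
        have := (Nat.cast_le (α := ℤ)).mpr h'
        push_cast at this
        linarith
      have haN : (N:ℤ) + 1 ≤ (a:ℤ) := by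
        by_contra hcon
        push_neg at hcon
        nlinarith [mul_le_mul (show (n1:ℤ) - 1 ≤ 2*(N:ℤ)-2 by linarith) (show (a:ℤ) ≤ (N:ℤ) by linarith)
            (by linarith : (0:ℤ) ≤ (a:ℤ)) (by linarith : (0:ℤ) ≤ 2*(N:ℤ)-2),
          mul_nonneg (mul_nonneg (by linarith : (0:ℤ) ≤ (N:ℤ)) (by linarith : (0:ℤ) ≤ (N:ℤ))) (by linarith : (0:ℤ) ≤ (N:ℤ) - 3)]
      by_cases hde' : d * e = n1
      · -- C3a
        have hdeZ : (d:ℤ)*e = (n1:ℤ) := by exact_mod_cast hde'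
        have hpoly : (N:ℤ)*(n1:ℤ)*((n1:ℤ)-1) < 2*((n1:ℤ)-N)*((N:ℤ)^3-N+2) :=
          poly3 N (n1:ℤ) HN (by linarith) (by linarith)
        have t1 := mul_le_mul_of_nonneg_left (show 2*((d:ℤ)+e-2) ≤ (n1:ℤ) by linarith [h4sum, hdeZ])
              (mul_nonneg (by linarith : (0:ℤ) ≤ (N:ℤ)) (by linarith : (0:ℤ) ≤ (n1:ℤ)-1))
        have t2 := mul_le_mul_of_nonneg_left Hbig (show (0:ℤ) ≤ 2*((n1:ℤ)-N) by linarith)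
        have t3 := mul_le_mul_of_nonneg_left Hag (show (0:ℤ) ≤ 2*((n1:ℤ)-N) by linarith)
        have hstep : ((N:ℤ)*((d:ℤ)+e-2)) * (2*((n1:ℤ)-1)) < (((n1:ℤ)-N)*a) * (2*((n1:ℤ)-1)) := by
          linarith [hpoly, t1, t2, t3]
        have hfin : (N:ℤ)*((d:ℤ)+e-2) < ((n1:ℤ)-N)*a :=
          lt_of_mul_lt_mul_right hstep (by linarith)
        linarith [hfin]
      · -- C3b : d*e < n1 and d*e ∣ n1
        have h2de : 2 * (d * e) ≤ n1 := by
          obtain ⟨k, hk⟩ := hdem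
          have hdek : d * e ≠ n1 := hde'
          rcases Nat.lt_or_ge k 2 with hk2 | hk2
          · interval_cases k <;> omega
          · calc 2 * (d*e) = (d*e) * 2 := by ring
            _ ≤ (d*e) * k := Nat.mul_le_mul_left _ hk2
            _ = n1 := hk.symm
        have hdeN : d * e < N := by
          by_contra hcc
          push_neg at hcc
          have hh := Nat.mul_le_mul_left 2 hcc
          have : 2 * (d*e) ≤ 2*N - 1 := le_trans h2de hmb
          omega
        have hdeNZ : (d:ℤ)*e ≤ (N:ℤ) - 1 := by
          have : d * e ≤ N - 1 := by omega
          have h' := (Nat.cast_le (α := ℤ)).mpr this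
          push_cast [Nat.cast_sub (by omega : 1 ≤ N)] at h'
          exact_mod_cast h'
        -- 2a ≥ N² + N + 1
        have hX : ((N:ℤ)-1) * (2*a - (N:ℤ)^2 - N) ≥ 2 := by
          nlinarith [mul_le_mul_of_nonneg_right (show (n1:ℤ) - 1 ≤ 2*(N:ℤ)-2 by linarith)
            (by linarith : (0:ℤ) ≤ (a:ℤ)), Hag, Hbig]
        have h2a : (N:ℤ)^2 + N + 1 ≤ 2*a := by
          by_contra hcc
          push_neg at hcc
          nlinarith [mul_le_mul_of_nonneg_left (show 2*(a:ℤ) - (N:ℤ)^2 - N ≤ 0 by linarith)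
            (by linarith : (0:ℤ) ≤ (N:ℤ) - 1)]
        have hfin : (N:ℤ)*((d:ℤ)+e-2) < ((n1:ℤ)-N)*a := by
          nlinarith [mul_le_mul_of_nonneg_left (show 2*((d:ℤ)+e-2) ≤ (d:ℤ)*e by linarith)
              (by linarith : (0:ℤ) ≤ 2*(N:ℤ)),
            mul_le_mul_of_nonneg_left hdeNZ (by linarith : (0:ℤ) ≤ 2*(N:ℤ)),
            mul_nonneg (by linarith : (0:ℤ) ≤ (n1:ℤ) - N - 1) (by linarith : (0:ℤ) ≤ (a:ℤ))]
        linarith [hfin]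
    · -- C-ii : n1 ≥ 2N
      have hmbZ : 2*(N:ℤ) ≤ (n1:ℤ) := by
        have : 2*N ≤ n1 := by omega
        exact_mod_cast this
      by_cases haN : a ≤ N
      · -- C2
        have haNZ : (a:ℤ) ≤ (N:ℤ) := by exact_mod_cast haN
        have hM2 : (N:ℤ)^2 + 1 ≤ (n1:ℤ) := by
          by_contra hcc
          push_neg at hcc
          nlinarith [mul_le_mul_of_nonneg_right (show (n1:ℤ) - 1 ≤ (N:ℤ)^2 - 1 by linarith)
              (by linarith : (0:ℤ) ≤ (a:ℤ)),
            mul_le_mul_of_nonneg_left haNZ (by linarith : (0:ℤ) ≤ (N:ℤ)^2 - 1), Hag, Hbig]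
        have ha3 : (3:ℤ) ≤ (a:ℤ) := by linarith
        nlinarith [mul_le_mul_of_nonneg_left (show (d:ℤ)+e-2 ≤ 2*(N:ℤ)-2 by linarith)
            (by linarith : (0:ℤ) ≤ (N:ℤ)),
          mul_nonneg (by linarith : (0:ℤ) ≤ (n1:ℤ)-N) (by linarith : (0:ℤ) ≤ (a:ℤ)-3)]
      · -- C1
        have haNZ : (N:ℤ) + 1 ≤ (a:ℤ) := by
          have : N + 1 ≤ a := by omega
          exact_mod_cast this
        nlinarith [mul_le_mul_of_nonneg_left (show 2*((d:ℤ)+e-2) ≤ (d:ℤ)*e by linarith)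
            (by linarith : (0:ℤ) ≤ (N:ℤ)),
          mul_le_mul_of_nonneg_left Hde_n1 (by linarith : (0:ℤ) ≤ (N:ℤ)),
          mul_pos (show (0:ℤ) < (n1:ℤ)-N by linarith) (show (0:ℤ) < (a:ℤ)-N by linarith)]


lemma cofactor_coprime {x y n : ℕ} (hn : 0 < n) (hx : x ∣ n) (hy : y ∣ n)
    (h : Nat.lcm x y = n) : Nat.Coprime (n / x) (n / y) := by
  set G := Nat.gcd (n / x) (n / y) with hG
  have hGx : G ∣ n / x := Nat.gcd_dvd_left _ _
  have hGy : G ∣ n / y := Nat.gcd_dvd_right _ _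
  obtain ⟨u, hu⟩ := hGx
  obtain ⟨v, hv⟩ := hGy
  have hxn : x * (n / x) = n := Nat.mul_div_cancel' hx
  have hyn : y * (n / y) = n := Nat.mul_div_cancel' hy
  have hGn : G ∣ n := dvd_trans (Nat.gcd_dvd_left _ _) (Nat.div_dvd_of_dvd hx)
  have hG0 : 0 < G := Nat.pos_of_dvd_of_pos hGn hn
  have h1 : x ∣ n / G := by
    refine ⟨u, ?_⟩
    have hnn : n = G * (x * u) := by rw [← hxn, hu]; ring
    rw [hnn, Nat.mul_div_cancel_left _ hG0]
  have h2 : y ∣ n / G := by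
    refine ⟨v, ?_⟩
    have hnn : n = G * (y * v) := by rw [← hyn, hv]; ring
    rw [hnn, Nat.mul_div_cancel_left _ hG0]
  have h3 : n ∣ n / G := by have := Nat.lcm_dvd h1 h2; rwa [h] at this
  have h5 : n / G = n :=
    Nat.le_antisymm (Nat.div_le_self _ _)
      (Nat.le_of_dvd (Nat.div_pos (Nat.le_of_dvd hn hGn) hG0) h3)
  have h6 : G * (n / G) = n := Nat.mul_div_cancel' hGn
  rw [h5] at h6
  have : G = 1 := by
    rcases Nat.eq_zero_or_pos n with h0 | h0
    · omega
    · nlinarith [hG0]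
  exact this

lemma forward_case (N g n n1 a d e : ℕ) (hN : 3 ≤ N)
    (HE : 2 * (g:ℤ) + a + d + e = (n:ℤ) + 2)
    (Hn : (n:ℤ) = (n1:ℤ) * a)
    (H2g : ((N:ℤ)) ^ 3 + 2 ≤ 2 * g + N)
    (Hd1 : (1:ℤ) ≤ (d:ℤ)) (He1 : (1:ℤ) ≤ (e:ℤ))
    (Hde_n1 : (d:ℤ) * e ≤ (n1:ℤ))
    (h : n1 = N) :
    2 * (N:ℤ) * g ≤ (n:ℤ) * ((N:ℤ) - 1) ∧ (n:ℤ) * ((N:ℤ) - 2) < 2 * ((N:ℤ) - 1) * g := by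
  have HN : (3:ℤ) ≤ (N:ℤ) := by exact_mod_cast hN
  have HNn1 : (n1:ℤ) = (N:ℤ) := by exact_mod_cast h
  have HNa : (n:ℤ) = (N:ℤ) * a := by rw [Hn, HNn1]
  have Hag : 2*(g:ℤ) + a ≤ (n:ℤ) := by linarith
  have HdeN : (d:ℤ) * e ≤ (N:ℤ) := by rw [← HNn1]; exact Hde_n1
  have Hde : (d:ℤ) + e ≤ (N:ℤ) + 1 := by
    nlinarith [mul_nonneg (by linarith : (0:ℤ) ≤ (d:ℤ) - 1) (by linarith : (0:ℤ) ≤ (e:ℤ) - 1)]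
  have HaLB : (N:ℤ)^2 + (N:ℤ) + 1 ≤ (a:ℤ) := by
    by_contra hcon
    push_neg at hcon
    nlinarith [mul_le_mul_of_nonneg_left (by linarith : (a:ℤ) ≤ (N:ℤ)^2 + N)
      (by linarith : (0:ℤ) ≤ (N:ℤ) - 1)]
  have HEN1 : ((N:ℤ) - 1) * (2*g + a + d + e) = ((N:ℤ) - 1) * (n + 2) := by rw [HE]
  constructor
  · nlinarith [mul_le_mul_of_nonneg_left Hag (by linarith : (0:ℤ) ≤ (N:ℤ))]
  · nlinarith [mul_le_mul_of_nonneg_left (by linarith : (d:ℤ) + e - 2 ≤ (N:ℤ) - 1)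
      (by linarith : (0:ℤ) ≤ (N:ℤ) - 1), HEN1]

lemma small_case (N g n n1 a d e : ℕ) (hN : 3 ≤ N)
    (HE : 2 * (g:ℤ) + a + d + e = (n:ℤ) + 2)
    (Hn : (n:ℤ) = (n1:ℤ) * a)
    (Ha1 : (1:ℤ) ≤ (a:ℤ)) (Hd1 : (1:ℤ) ≤ (d:ℤ)) (He1 : (1:ℤ) ≤ (e:ℤ))
    (Hm1 : (2:ℤ) ≤ (n1:ℤ))
    (Hlt : (n1:ℤ) + 1 ≤ (N:ℤ))
    (hup : (n:ℤ) * ((N:ℤ) - 2) < 2 * ((N:ℤ) - 1) * g) : False := by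
  have HNZ : (3:ℤ) ≤ (N:ℤ) := by exact_mod_cast hN
  have Hag : 2*(g:ℤ) ≤ ((n1:ℤ) - 1) * a := by linarith [HE, Hn]
  nlinarith [mul_le_mul_of_nonneg_left Hag (by linarith : (0:ℤ) ≤ (N:ℤ) - 1),
    mul_le_mul_of_nonneg_right
      (show ((N:ℤ)-1)*((n1:ℤ)-1) ≤ ((N:ℤ)-2)*(n1:ℤ) by nlinarith)
      (by linarith : (0:ℤ) ≤ (a:ℤ))]


theorem stmt_7 (N g n n1 n2 n3 : ℕ)
    (hN : 3 ≤ N) (hg : (g : ℚ) > (N - 1) * N * (N + 1) / 2)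
    (hn : 0 < n) (h1 : 2 ≤ n1) (h12' : n1 ≤ n2) (h23' : n2 ≤ n3)
    (h12 : Nat.lcm n1 n2 = n) (h23 : Nat.lcm n2 n3 = n) (h31 : Nat.lcm n3 n1 = n)
    (hRH : 2 * ((g : ℚ) - 1) = n * (1 - 1/n1 - 1/n2 - 1/n3)) :
    n1 = N ↔ (2 * N * g / ((N : ℚ) - 1) ≤ n ∧ (n : ℚ) < 2 * (N - 1) * g / ((N : ℚ) - 2)) := by
  have hn1 : 0 < n1 := by omega
  have hn2 : 0 < n2 := by omega
  have hn3 : 0 < n3 := by omega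
  have hdv1 : n1 ∣ n := by rw [← h12]; exact Nat.dvd_lcm_left _ _
  have hdv2 : n2 ∣ n := by rw [← h12]; exact Nat.dvd_lcm_right _ _
  have hdv3 : n3 ∣ n := by rw [← h31]; exact Nat.dvd_lcm_left _ _
  set a := n / n1 with ha_def
  set d := n / n2 with hd_def
  set e := n / n3 with he_def
  have ha : n1 * a = n := Nat.mul_div_cancel' hdv1
  have hd : n2 * d = n := Nat.mul_div_cancel' hdv2
  have he : n3 * e = n := Nat.mul_div_cancel' hdv3
  have cad : Nat.Coprime a d := cofactor_coprime hn hdv1 hdv2 h12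
  have cde : Nat.Coprime d e := cofactor_coprime hn hdv2 hdv3 h23
  have cae : Nat.Coprime a e := (cofactor_coprime hn hdv3 hdv1 h31).symm
  have ha1 : 1 ≤ a := Nat.div_pos (Nat.le_of_dvd hn hdv1) hn1
  have hd1 : 1 ≤ d := Nat.div_pos (Nat.le_of_dvd hn hdv2) hn2
  have he1 : 1 ≤ e := Nat.div_pos (Nat.le_of_dvd hn hdv3) hn3
  have hda : d ≤ a := by
    by_contra hcon
    push_neg at hcon
    have : n1 * a < n2 * d := Nat.mul_lt_mul_of_le_of_lt h12' hcon hn2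
    omega
  have hed : e ≤ d := by
    by_contra hcon
    push_neg at hcon
    have : n2 * d < n3 * e := Nat.mul_lt_mul_of_le_of_lt h23' hcon hn3
    omega
  -- d, e, d*e all divide n1
  have hdm : d ∣ n1 := by
    have : d ∣ n1 * a := by rw [ha]; exact Nat.div_dvd_of_dvd hdv2
    exact (Nat.Coprime.dvd_of_dvd_mul_right cad.symm this)
  have hem : e ∣ n1 := by
    have : e ∣ n1 * a := by rw [ha]; exact Nat.div_dvd_of_dvd hdv3
    exact (Nat.Coprime.dvd_of_dvd_mul_right cae.symm this)
  have hdem : d * e ∣ n1 := Nat.Coprime.mul_dvd_of_dvd_of_dvd cde hdm hem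
  -- key integer equation : 2g + a + d + e = n + 2
  have hE : 2 * g + a + d + e = n + 2 := by
    have q1 : (n : ℚ) * (1 / n1) = a := by
      rw [← ha]; push_cast
      field_simp
    have q2 : (n : ℚ) * (1 / n2) = d := by
      rw [← hd]; push_cast; field_simp
    have q3 : (n : ℚ) * (1 / n3) = e := by
      rw [← he]; push_cast; field_simp
    have hq : 2 * ((g : ℚ) - 1) = (n : ℚ) - a - d - e := by
      rw [hRH]
      rw [mul_sub, mul_sub, mul_sub, mul_one, q1, q2, q3]
    have : ((2 * g + a + d + e : ℕ) : ℚ) = ((n + 2 : ℕ) : ℚ) := by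
      push_cast
      linarith
    exact_mod_cast this
  -- 2g is big
  have h2g : N ^ 3 + 2 ≤ 2 * g + N := by
    have hq : ((N : ℚ)) ^ 3 < 2 * g + N := by nlinarith [hg]
    have h1' : N ^ 3 + 1 ≤ 2 * g + N := by exact_mod_cast hq
    have hp : N ^ 3 % 2 = N % 2 := by
      conv_lhs => rw [Nat.pow_mod]
      rcases Nat.mod_two_eq_zero_or_one N with h | h <;> simp [h]
    omega
  -- bridge the rational inequalities to integer ones
  have hN1Q : (0 : ℚ) < (N : ℚ) - 1 := by
    have : (3 : ℚ) ≤ (N : ℚ) := by exact_mod_cast hN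
    linarith
  have hN2Q : (0 : ℚ) < (N : ℚ) - 2 := by
    have : (3 : ℚ) ≤ (N : ℚ) := by exact_mod_cast hN
    linarith
  rw [div_le_iff₀ hN1Q, lt_div_iff₀ hN2Q]
  suffices hmain : n1 = N ↔
      (2 * (N:ℤ) * g ≤ (n:ℤ) * ((N:ℤ) - 1) ∧ (n:ℤ) * ((N:ℤ) - 2) < 2 * ((N:ℤ) - 1) * g) by
    constructor
    · intro h
      obtain ⟨hA, hB⟩ := hmain.mp h
      constructor
      · exact_mod_cast hA
      · exact_mod_cast hB
    · rintro ⟨hA, hB⟩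
      exact hmain.mpr ⟨by exact_mod_cast hA, by exact_mod_cast hB⟩
  -- integer versions of facts
  have HE : 2 * (g:ℤ) + a + d + e = (n:ℤ) + 2 := by exact_mod_cast hE
  have Hn : (n:ℤ) = (n1:ℤ) * a := by exact_mod_cast ha.symm
  have H2g : ((N:ℤ)) ^ 3 + 2 ≤ 2 * g + N := by exact_mod_cast h2g
  have HN : (3:ℤ) ≤ (N:ℤ) := by exact_mod_cast hN
  have Ha1 : (1:ℤ) ≤ (a:ℤ) := by exact_mod_cast ha1
  have Hd1 : (1:ℤ) ≤ (d:ℤ) := by exact_mod_cast hd1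
  have He1 : (1:ℤ) ≤ (e:ℤ) := by exact_mod_cast he1
  have Hda : (d:ℤ) ≤ (a:ℤ) := by exact_mod_cast hda
  have Hed : (e:ℤ) ≤ (d:ℤ) := by exact_mod_cast hed
  have Hm1 : (2:ℤ) ≤ (n1:ℤ) := by exact_mod_cast h1
  have Hde_n1 : (d:ℤ) * e ≤ (n1:ℤ) := by exact_mod_cast Nat.le_of_dvd hn1 hdem
  constructor
  · -- forward: n1 = N
    intro h
    exact forward_case N g n n1 a d e hN HE Hn H2g Hd1 He1 Hde_n1 h
  · -- converse
    intro hiff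
    obtain ⟨hlo, hup⟩ := hiff
    by_contra hne
    rcases Nat.lt_or_ge n1 N with hlt | hge
    · -- n1 ≤ N - 1 : contradict the upper bound
      have Hlt : (n1:ℤ) + 1 ≤ (N:ℤ) := by exact_mod_cast hlt
      exact small_case N g n n1 a d e hN HE Hn Ha1 Hd1 He1 Hm1 Hlt hup
    · have hgt : N + 1 ≤ n1 := by omega
      have HM : (N:ℤ) + 1 ≤ (n1:ℤ) := by exact_mod_cast hgt
      have habs := hard_case N g n n1 a d e hN HE Hn H2g HN Ha1 Hd1 He1 Hda Hed
        Hde_n1 HM hdm hdem cad cde hn1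
      -- from hlo deduce the opposite inequality
      have HEN : (N:ℤ) * (2*g + a + d + e) = (N:ℤ) * (n + 2) := by rw [HE]
      linarith only [hlo, HEN, habs]
end

section
/- Let g ≥ 2 and let n, n1, n2, n3 be positive integers with 2 ≤ n1 ≤ n2 ≤ n3, each dividing n, and 2(g-1) = n(1 - 1/n1 - 1/n2 - 1/n3). Then n1 ≤ 2g + 1. -/
theorem stmt_11 (g n n1 n2 n3 : ℕ)
    (hg : 2 ≤ g) (hn : 0 < n)
    (h1 : 2 ≤ n1) (h12' : n1 ≤ n2) (h23' : n2 ≤ n3)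
    (hd1 : n1 ∣ n) (hd2 : n2 ∣ n) (hd3 : n3 ∣ n)
    (hRH : 2 * ((g : ℚ) - 1) = n * (1 - 1/n1 - 1/n2 - 1/n3)) :
    n1 ≤ 2 * g + 1 := by
  rcases le_or_gt n1 3 with h | h
  · omega
  · have hn1 : (0:ℚ) < n1 := by exact_mod_cast (by omega : 0 < n1)
    have hn2 : (0:ℚ) < n2 := by exact_mod_cast (by omega : 0 < n2)
    have hn3 : (0:ℚ) < n3 := by exact_mod_cast (by omega : 0 < n3)
    have hle : (n1:ℚ) ≤ n := by exact_mod_cast Nat.le_of_dvd hn hd1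
    have h2 : (1:ℚ)/n2 ≤ 1/n1 := by
      apply one_div_le_one_div_of_le hn1; exact_mod_cast h12'
    have h3 : (1:ℚ)/n3 ≤ 1/n1 := by
      apply one_div_le_one_div_of_le hn1; exact_mod_cast (le_trans h12' h23')
    have h4 : (4:ℚ) ≤ n1 := by exact_mod_cast h
    have hpos : (0:ℚ) ≤ 1 - 3/n1 := by
      rw [sub_nonneg, div_le_one hn1]; linarith
    have hub : (1 - 1/(n1:ℚ) - 1/n2 - 1/n3) ≥ 1 - 3/n1 := by
      have : (3:ℚ)/n1 = 1/n1 + 1/n1 + 1/n1 := by ring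
      linarith
    have key : (n1:ℚ) * (1 - 3/n1) ≤ n * (1 - 1/n1 - 1/n2 - 1/n3) := by
      calc (n1:ℚ) * (1 - 3/n1) ≤ n * (1 - 3/n1) := by
            exact mul_le_mul_of_nonneg_right hle hpos
        _ ≤ n * (1 - 1/n1 - 1/n2 - 1/n3) := by
            apply mul_le_mul_of_nonneg_left hub
            positivity
    have heq : (n1:ℚ) * (1 - 3/n1) = n1 - 3 := by field_simp
    have hfin : (n1:ℚ) ≤ 2 * g + 1 := by rw [heq] at key; linarith
    exact_mod_cast hfin
end

section
/- Let g ≥ 2 and let n, n1, n2, n3 be positive integers with 2 ≤ n1 ≤ n2 ≤ n3, lcm of any two equal to n, and 2(g-1) = n(1 - 1/n1 - 1/n2 - 1/n3). Then n ≤ 4g + 2. -/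
private lemma cop_aux (n x y a b : ℕ) (hn : 0 < n) (hl : Nat.lcm x y = n)
    (ha : x * a = n) (hb : y * b = n) : Nat.Coprime a b := by
  obtain ⟨a', ha'⟩ := Nat.gcd_dvd_left a b
  obtain ⟨b', hb'⟩ := Nat.gcd_dvd_right a b
  set d := Nat.gcd a b with hdd
  have ha0 : 0 < a := Nat.pos_of_ne_zero (by rintro rfl; simp at ha; omega)
  have hd0 : 0 < d := Nat.gcd_pos_of_pos_left _ ha0
  set m := x * a' with hm
  have hdm : d * m = n := by rw [hm, ← ha, ha']; ring
  have hxm : x ∣ m := Dvd.intro _ rfl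
  have hym : y ∣ m := by
    refine ⟨b', ?_⟩
    have : d * (y * b') = d * m := by rw [hdm, ← hb, hb']; ring
    exact (Nat.eq_of_mul_eq_mul_left hd0 this).symm
  have hnm : n ∣ m := hl ▸ Nat.lcm_dvd hxm hym
  have hmn : m ∣ n := ⟨d, by rw [← hdm]; ring⟩
  have hm0 : 0 < m := Nat.pos_of_ne_zero (by rintro h; rw [h, mul_zero] at hdm; omega)
  have hmeq : m = n := Nat.dvd_antisymm hmn hnm
  have : d * n = 1 * n := by rw [one_mul, ← hmeq]; exact hdm ▸ by rw [hmeq]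
  exact Nat.eq_of_mul_eq_mul_right hn this

private lemma arith1 (a b : ℕ) (h3a : 3 ≤ a) (h3b : 3 ≤ b) :
    3 * a + 3 * b ≤ a * b + 9 := by nlinarith

theorem stmt_12 (g n n1 n2 n3 : ℕ)
    (hg : 2 ≤ g) (hn : 0 < n)
    (h1 : 2 ≤ n1) (h12' : n1 ≤ n2) (h23' : n2 ≤ n3)
    (h12 : Nat.lcm n1 n2 = n) (h23 : Nat.lcm n2 n3 = n) (h31 : Nat.lcm n3 n1 = n)
    (hRH : 2 * ((g : ℚ) - 1) = n * (1 - 1/n1 - 1/n2 - 1/n3)) :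
    n ≤ 4 * g + 2 := by
  obtain ⟨a, ha⟩ : n1 ∣ n := h12 ▸ Nat.dvd_lcm_left n1 n2
  obtain ⟨b, hb⟩ : n2 ∣ n := h12 ▸ Nat.dvd_lcm_right n1 n2
  obtain ⟨c, hc⟩ : n3 ∣ n := h23 ▸ Nat.dvd_lcm_right n2 n3
  have h2 : 2 ≤ n2 := le_trans h1 h12'
  have h3 : 2 ≤ n3 := le_trans h2 h23'
  have ha' : n1 * a = n := ha.symm
  have hb' : n2 * b = n := hb.symm
  have hc' : n3 * c = n := hc.symm
  have ha0 : 0 < a := Nat.pos_of_ne_zero (by rintro rfl; simp at ha; omega)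
  have hb0 : 0 < b := Nat.pos_of_ne_zero (by rintro rfl; simp at hb; omega)
  have hc0 : 0 < c := Nat.pos_of_ne_zero (by rintro rfl; simp at hc; omega)
  have cab : Nat.Coprime a b := cop_aux n n1 n2 a b hn h12 ha' hb'
  have cbc : Nat.Coprime b c := cop_aux n n2 n3 b c hn h23 hb' hc'
  have cca : Nat.Coprime c a := cop_aux n n3 n1 c a hn h31 hc' ha'
  -- ordering: c ≤ b ≤ a
  have hba : b ≤ a := by
    refine Nat.le_of_mul_le_mul_left ?_ (show 0 < n2 by omega)
    calc n2 * b = n1 * a := hb'.trans ha'.symm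
    _ ≤ n2 * a := Nat.mul_le_mul_right a h12'
  have hcb : c ≤ b := by
    refine Nat.le_of_mul_le_mul_left ?_ (show 0 < n3 by omega)
    calc n3 * c = n2 * b := hc'.trans hb'.symm
    _ ≤ n3 * b := Nat.mul_le_mul_right b h23'
  -- 2a ≤ n etc.
  have h2a : 2 * a ≤ n := ha' ▸ Nat.mul_le_mul_right a h1
  have h2b : 2 * b ≤ n := hb' ▸ Nat.mul_le_mul_right b h2
  have h2c : 2 * c ≤ n := hc' ▸ Nat.mul_le_mul_right c h3
  -- the RH equation in ℕ : n + 2 = 2g + a + b + c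
  have hq1 : (n1 : ℚ) ≠ 0 := Nat.cast_ne_zero.mpr (by omega)
  have hq2 : (n2 : ℚ) ≠ 0 := Nat.cast_ne_zero.mpr (by omega)
  have hq3 : (n3 : ℚ) ≠ 0 := Nat.cast_ne_zero.mpr (by omega)
  have haq : (n1 : ℚ) * a = n := by exact_mod_cast congrArg (Nat.cast : ℕ → ℚ) ha'
  have hbq : (n2 : ℚ) * b = n := by exact_mod_cast congrArg (Nat.cast : ℕ → ℚ) hb'
  have hcq : (n3 : ℚ) * c = n := by exact_mod_cast congrArg (Nat.cast : ℕ → ℚ) hc'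
  have hA : (n : ℚ) / n1 = a := by rw [← haq]; field_simp
  have hB : (n : ℚ) / n2 = b := by rw [← hbq]; field_simp
  have hC : (n : ℚ) / n3 = c := by rw [← hcq]; field_simp
  have hRH' : (n : ℚ) + 2 = 2 * g + a + b + c := by
    have e : (n : ℚ) * (1 - 1/n1 - 1/n2 - 1/n3) = n - n/n1 - n/n2 - n/n3 := by ring
    rw [e, hA, hB, hC] at hRH
    linarith
  have key : n + 2 = 2 * g + a + b + c := by exact_mod_cast hRH'
  -- case analysis
  rcases Nat.lt_or_ge c 2 with hc2 | hc2
  · -- c = 1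
    have hc1 : c = 1 := by omega
    rcases Nat.lt_or_ge b 2 with hb2 | hb2
    · -- b = 1 : n = 2g + a, 2a ≤ n
      omega
    · -- b ≥ 2
      have hab : a ≠ b := fun h => by
        have : Nat.gcd a b = a := by rw [h, Nat.gcd_self]
        rw [cab] at this; omega
      have habd : a * b ∣ n := Nat.Coprime.mul_dvd_of_dvd_of_dvd cab ⟨n1, by rw [← ha']; ring⟩ ⟨n2, by rw [← hb']; ring⟩
      have habn : a * b ≤ n := Nat.le_of_dvd hn habd
      rcases Nat.lt_or_ge b 3 with hb3 | hb3
      · -- b = 2, a odd ≥ 3 : 2a ≤ ab ≤ n, n = 2g+1+a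
        have hbe : b = 2 := by omega
        subst hbe
        omega
      · -- b ≥ 3 : (a-3)(b-3) ≥ 0 ⟹ 3a+3b ≤ ab+9 ≤ n+9 ⟹ n ≤ 3g+3
        have ha3 : 3 ≤ a := by omega
        have h9 : 3 * a + 3 * b ≤ a * b + 9 := arith1 a b ha3 hb3
        linarith
  · -- c ≥ 2 ⟹ b ≥ 3, a ≥ 4, abc ≤ n, a+b+c ≤ 3a, 6a ≤ abc
    have hbc : b ≠ c := fun h => by
      have : Nat.gcd b c = b := by rw [h, Nat.gcd_self]
      rw [cbc] at this; omega
    have hab : a ≠ b := fun h => by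
      have : Nat.gcd a b = a := by rw [h, Nat.gcd_self]
      rw [cab] at this; omega
    have hb3 : 3 ≤ b := by omega
    have cab' : Nat.Coprime (a * b) c := Nat.Coprime.mul cca.symm cbc
    have habd : a * b ∣ n := Nat.Coprime.mul_dvd_of_dvd_of_dvd cab ⟨n1, by rw [← ha']; ring⟩ ⟨n2, by rw [← hb']; ring⟩
    have habcd : a * b * c ∣ n := Nat.Coprime.mul_dvd_of_dvd_of_dvd cab' habd ⟨n3, by rw [← hc']; ring⟩
    have habcn : a * b * c ≤ n := Nat.le_of_dvd hn habcd
    have h6 : 6 * a ≤ a * b * c := by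
      calc 6 * a = a * 6 := by ring
      _ ≤ a * (b * c) := Nat.mul_le_mul_left a (Nat.mul_le_mul hb3 hc2)
      _ = a * b * c := (mul_assoc a b c).symm
    linarith
end

section
/- Let g ≥ 2 and let n, n1, n2, n3, n4 be positive integers with 3 ≤ n1 ≤ n2 ≤ n3 ≤ n4, each ni dividing n, and 2(g-1) = n(2 - 1/n1 - 1/n2 - 1/n3 - 1/n4). Then n ≤ (n1/(n1-2))(g-1) ≤ 3(g-1); in particular n < 4g+2. -/
theorem stmt_16 (g n n1 n2 n3 n4 : ℕ)
    (hg : 2 ≤ g) (hn : 0 < n)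
    (h1 : 3 ≤ n1) (h12 : n1 ≤ n2) (h23 : n2 ≤ n3) (h34 : n3 ≤ n4)
    (hd1 : n1 ∣ n) (hd2 : n2 ∣ n) (hd3 : n3 ∣ n) (hd4 : n4 ∣ n)
    (hRH : 2 * ((g : ℚ) - 1) = n * (2 - 1/n1 - 1/n2 - 1/n3 - 1/n4)) :
    (n : ℚ) ≤ (n1 / ((n1 : ℚ) - 2)) * (g - 1) ∧ (n : ℚ) ≤ 3 * ((g : ℚ) - 1) ∧ n < 4 * g + 2 := by
  have ha : (3:ℚ) ≤ (n1:ℚ) := by exact_mod_cast h1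
  have hb : (n1:ℚ) ≤ n2 := by exact_mod_cast h12
  have hc : (n2:ℚ) ≤ n3 := by exact_mod_cast h23
  have hd : (n3:ℚ) ≤ n4 := by exact_mod_cast h34
  have hn' : (0:ℚ) ≤ (n:ℚ) := by positivity
  have hg' : (2:ℚ) ≤ (g:ℚ) := by exact_mod_cast hg
  have hA : (0:ℚ) < n1 := by linarith
  have i2 : 1/(n2:ℚ) ≤ 1/(n1:ℚ) := one_div_le_one_div_of_le hA hb
  have i3 : 1/(n3:ℚ) ≤ 1/(n1:ℚ) := one_div_le_one_div_of_le hA (hb.trans hc)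
  have i4 : 1/(n4:ℚ) ≤ 1/(n1:ℚ) := one_div_le_one_div_of_le hA ((hb.trans hc).trans hd)
  have key : (n:ℚ) * (2 - 1/n1 - 1/n1 - 1/n1 - 1/n1) ≤ 2 * ((g:ℚ) - 1) := by
    rw [hRH]
    have := mul_le_mul_of_nonneg_left i2 hn'
    nlinarith [mul_le_mul_of_nonneg_left i2 hn', mul_le_mul_of_nonneg_left i3 hn',
      mul_le_mul_of_nonneg_left i4 hn']
  have hinv : (n1:ℚ) * (1/n1) = 1 := by field_simp
  have step : (n:ℚ) * ((n1:ℚ) - 2) ≤ (n1:ℚ) * ((g:ℚ) - 1) := by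
    nlinarith [mul_le_mul_of_nonneg_right key (le_of_lt hA)]
  have hsub : (0:ℚ) < (n1:ℚ) - 2 := by linarith
  have first : (n : ℚ) ≤ (n1 / ((n1 : ℚ) - 2)) * (g - 1) := by
    rw [div_mul_eq_mul_div, le_div_iff₀ hsub]
    linarith
  have second : (n : ℚ) ≤ 3 * ((g : ℚ) - 1) := by nlinarith
  refine ⟨first, second, ?_⟩
  have : (n:ℚ) < 4 * g + 2 := by linarith
  exact_mod_cast this
end

section
/- For every integer k ≥ 1 and g = 3(2k+1), with n = 8g/3 = 16k+8, the two data sets with valencies (1/4, 1/(16k+8), (12k+5)/(16k+8)) and (3/4, 1/(16k+8), (4k+1)/(16k+8)) both satisfy the conditions of Proposition 2.2 (sum of numerators ≡ 0 mod n, Riemann–Hurwitz with orbit genus 0 and genus g, gcd condition), yet no unit u modulo n maps the multiset of valencies of the first to that of the second (i.e., the corresponding periodic maps are not conjugate up to power). -/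
/-!
In both data one valency has denominator `4` and the other two have denominator `n`, so the
Riemann–Hurwitz count is `n (3/4 - 2/n) = 3n/4 - 2 = 2g - 2`. The data are not conjugate up to power:
a unit `u` sending the first valency multiset to the second must send `1/4` to `3/4`, so
`u ≡ 3 [MOD 4]`, and `1/n` to `1/n` or `(4k+1)/n`, so `u ≡ 1 [MOD 4]` since `4 ∣ n`.
-/

lemma coprime_twelve_mul_add_five (k : ℕ) : Nat.Coprime (12 * k + 5) (16 * k + 8) := by
  have h : Nat.Coprime (12 * k + 5) (3 * (16 * k + 8)) := by
    rw [show 3 * (16 * k + 8) = 4 + 4 * (12 * k + 5) by ring, Nat.coprime_add_mul_right_right,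
      show 12 * k + 5 = 1 + 4 * (3 * k + 1) by ring, Nat.coprime_add_mul_left_left]
    exact Nat.coprime_one_left 4
  exact Nat.Coprime.coprime_mul_left_right h

lemma coprime_four_mul_add_one (k : ℕ) : Nat.Coprime (4 * k + 1) (16 * k + 8) := by
  rw [show 16 * k + 8 = 4 + 4 * (4 * k + 1) by ring, Nat.coprime_add_mul_right_right,
    show 4 * k + 1 = 1 + 4 * k by ring, Nat.coprime_add_mul_left_left]
  exact Nat.coprime_one_left 4

lemma prop22_conditions_of_gcd {a b n g : ℕ} (hsum : a + 1 + b = n) (hg : 8 * g = 3 * n)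
    (ha : 4 * Nat.gcd a n = n) (hb : Nat.Coprime b n) :
    (a + 1 + b) % n = 0 ∧
    Nat.gcd (Nat.gcd (Nat.gcd a 1) b) n = 1 ∧
    2 * ((g : ℚ) - 1) = (n : ℚ) * (-2 + (1 - 1/(n / Nat.gcd a n : ℚ))
        + (1 - 1/(n / Nat.gcd 1 n : ℚ)) + (1 - 1/(n / Nat.gcd b n : ℚ))) := by
  refine ⟨by rw [hsum, Nat.mod_self], by simp, ?_⟩
  have hn : (n : ℚ) ≠ 0 := Nat.cast_ne_zero.mpr (by omega)
  have ha' : (n : ℚ) / Nat.gcd a n = 4 := by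
    have hpos : (Nat.gcd a n : ℚ) ≠ 0 := Nat.cast_ne_zero.mpr (by omega)
    rw [div_eq_iff hpos]
    exact_mod_cast ha.symm
  have hg' : (8 : ℚ) * g = 3 * n := by exact_mod_cast hg
  rw [ha', Nat.gcd_one_left, Nat.Coprime.gcd_eq_one hb, Nat.cast_one]
  field_simp
  linarith

lemma map_valencies_ne {n c d : ℕ} (hn : 4 ∣ n) (hn4 : n ≠ 4) (hd : d % 4 = 1) (u : ℕ) :
    Multiset.map (fun p : ℕ × ℕ => (u * p.1 % p.2, p.2))
      ({(1, 4), (1, n), (c, n)} : Multiset (ℕ × ℕ)) ≠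
    ({(3, 4), (1, n), (d, n)} : Multiset (ℕ × ℕ)) := by
  intro h
  have image_mem : ∀ m e, (m, e) ∈ ({(1, 4), (1, n), (c, n)} : Multiset (ℕ × ℕ)) →
      (u * m % e, e) ∈ ({(3, 4), (1, n), (d, n)} : Multiset (ℕ × ℕ)) := fun m e hme =>
    h ▸ Multiset.mem_map_of_mem _ hme
  have h4 := image_mem 1 4 (by simp)
  have hn' := image_mem 1 n (by simp)
  simp only [Multiset.insert_eq_cons, Multiset.mem_cons, Multiset.mem_singleton,
    Prod.mk.injEq, mul_one] at h4 hn'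
  have hmod : u % n % 4 = u % 4 := Nat.mod_mod_of_dvd u hn
  omega

theorem stmt_19_general (k : ℕ) (g n : ℕ)
    (hg : g = 3 * (2 * k + 1)) (hn : n = 16 * k + 8) :
    -- Proposition 2.2 conditions for the first data
    -- valencies: 1/4 = (4k+2)/n, 1/n, (12k+5)/n
    (((4 * k + 2) + 1 + (12 * k + 5)) % n = 0 ∧
     Nat.gcd (Nat.gcd (Nat.gcd (4 * k + 2) 1) (12 * k + 5)) n = 1 ∧
     2 * ((g : ℚ) - 1) = (n : ℚ) * (-2 + (1 - 1/(n / Nat.gcd (4 * k + 2) n : ℚ))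
        + (1 - 1/(n / Nat.gcd 1 n : ℚ)) + (1 - 1/(n / Nat.gcd (12 * k + 5) n : ℚ)))) ∧
    -- Proposition 2.2 conditions for the second data
    -- valencies: 3/4 = (12k+6)/n, 1/n, (4k+1)/n
    (((12 * k + 6) + 1 + (4 * k + 1)) % n = 0 ∧
     Nat.gcd (Nat.gcd (Nat.gcd (12 * k + 6) 1) (4 * k + 1)) n = 1 ∧
     2 * ((g : ℚ) - 1) = (n : ℚ) * (-2 + (1 - 1/(n / Nat.gcd (12 * k + 6) n : ℚ))
        + (1 - 1/(n / Nat.gcd 1 n : ℚ)) + (1 - 1/(n / Nat.gcd (4 * k + 1) n : ℚ)))) ∧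
    -- no unit u mod n maps the first valency multiset to the second under the power
    -- operation: (numerator m, denominator d) ↦ (u * m mod d, d)
    ¬ ∃ u : ℕ, Nat.Coprime u n ∧
      Multiset.map (fun p : ℕ × ℕ => (u * p.1 % p.2, p.2))
        ({(1, 4), (1, n), (12 * k + 5, n)} : Multiset (ℕ × ℕ)) =
      ({(3, 4), (1, n), (4 * k + 1, n)} : Multiset (ℕ × ℕ)) := by
  subst hg hn
  have hg : 8 * (3 * (2 * k + 1)) = 3 * (16 * k + 8) := by ring
  have h_quarter : Nat.gcd (4 * k + 2) (16 * k + 8) = 4 * k + 2 :=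
    Nat.gcd_eq_left ⟨4, by ring⟩
  have h_three_quarters : Nat.gcd (12 * k + 6) (16 * k + 8) = 4 * k + 2 := by
    rw [show 12 * k + 6 = (4 * k + 2) * 3 by ring, show 16 * k + 8 = (4 * k + 2) * 4 by ring,
      Nat.gcd_mul_left, show Nat.gcd 3 4 = 1 from rfl, mul_one]
  refine ⟨prop22_conditions_of_gcd (by ring) hg (by omega) (coprime_twelve_mul_add_five k),
    prop22_conditions_of_gcd (by ring) hg (by omega) (coprime_four_mul_add_one k), ?_⟩
  rintro ⟨u, -, h⟩
  exact map_valencies_ne ⟨4 * k + 2, by ring⟩ (by omega) (by omega) u h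

theorem stmt_19 (k : ℕ) (hk : 1 ≤ k) (g n : ℕ)
    (hg : g = 3 * (2 * k + 1)) (hn : n = 16 * k + 8) :
    -- Proposition 2.2 conditions for the first data
    -- valencies: 1/4 = (4k+2)/n, 1/n, (12k+5)/n
    (((4 * k + 2) + 1 + (12 * k + 5)) % n = 0 ∧
     Nat.gcd (Nat.gcd (Nat.gcd (4 * k + 2) 1) (12 * k + 5)) n = 1 ∧
     2 * ((g : ℚ) - 1) = (n : ℚ) * (-2 + (1 - 1/(n / Nat.gcd (4 * k + 2) n : ℚ))
        + (1 - 1/(n / Nat.gcd 1 n : ℚ)) + (1 - 1/(n / Nat.gcd (12 * k + 5) n : ℚ)))) ∧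
    -- Proposition 2.2 conditions for the second data
    -- valencies: 3/4 = (12k+6)/n, 1/n, (4k+1)/n
    (((12 * k + 6) + 1 + (4 * k + 1)) % n = 0 ∧
     Nat.gcd (Nat.gcd (Nat.gcd (12 * k + 6) 1) (4 * k + 1)) n = 1 ∧
     2 * ((g : ℚ) - 1) = (n : ℚ) * (-2 + (1 - 1/(n / Nat.gcd (12 * k + 6) n : ℚ))
        + (1 - 1/(n / Nat.gcd 1 n : ℚ)) + (1 - 1/(n / Nat.gcd (4 * k + 1) n : ℚ)))) ∧
    -- no unit u mod n maps the first valency multiset to the second under the power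
    -- operation: (numerator m, denominator d) ↦ (u * m mod d, d)
    ¬ ∃ u : ℕ, Nat.Coprime u n ∧
      Multiset.map (fun p : ℕ × ℕ => (u * p.1 % p.2, p.2))
        ({(1, 4), (1, n), (12 * k + 5, n)} : Multiset (ℕ × ℕ)) =
      ({(3, 4), (1, n), (4 * k + 1, n)} : Multiset (ℕ × ℕ)) :=
  stmt_19_general k g n hg hn
end
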